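/- Suppose a = −B(γ,δ) = cos(π/m) for an integer m ≥ 2. Then for every i ∈ ℤ, γ_i = δ_{m+1−i} and δ_i = γ_{m+1−i}. -/

import Mathlib

/-!
The pair `(γ_i, δ_i)` is expressed through Chebyshev polynomials of the second kind:
`γ_{j+1} = U_j(a) γ + U_{j-1}(a) δ` and `δ_{j+1} = U_{j-1}(a) γ + U_j(a) δ`, since each reflection
acts on the coefficients by the three-term recurrence `U_{j+1} = 2a U_j - U_{j-1}`.
At `a = cos (π/m)` we have `U_j(a) = sin ((j+1)π/m) / sin (π/m)`, so `U_j(a) = U_k(a)`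
whenever `j + k + 2 = m`.
-/

variable {V : Type*} [AddCommGroup V] [Module ℝ V]

/-- The reflection `s_μ` in a unit vector `μ`, acting by `s_μ(v) = v - 2 B(v,μ) μ`. -/
def reflVec (BF : LinearMap.BilinForm ℝ V) (μ v : V) : V :=
  v - (2 * BF v μ) • μ

open Polynomial.Chebyshev

lemma reflVec_reflVec {BF : LinearMap.BilinForm ℝ V} {μ : V} (hμ : BF μ μ = 1) (v : V) :
    reflVec BF μ (reflVec BF μ v) = v := by
  simp only [reflVec, map_sub, map_smul, LinearMap.sub_apply, LinearMap.smul_apply,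
    smul_eq_mul, hμ, mul_one]
  module

lemma reflVec_smul_add_smul {BF : LinearMap.BilinForm ℝ V} {μ : V} (hμ : BF μ μ = 1)
    (ν : V) (x y : ℝ) :
    reflVec BF μ (x • μ + y • ν) = (-2 * BF ν μ * y - x) • μ + y • ν := by
  simp only [reflVec, map_add, map_smul, LinearMap.add_apply, LinearMap.smul_apply,
    smul_eq_mul, hμ, mul_one]
  module

lemma Polynomial.Chebyshev.U_real_eval_cos_pi_div_eq {m : ℕ} (hm : 2 ≤ m) {j k : ℤ}
    (hjk : j + k + 2 = m) :
    (U ℝ j).eval (Real.cos (Real.pi / m)) = (U ℝ k).eval (Real.cos (Real.pi / m)) := by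
  have hm' : (1 : ℝ) < m := by exact_mod_cast hm
  have hsin : Real.sin (Real.pi / m) ≠ 0 :=
    (Real.sin_pos_of_pos_of_lt_pi (by positivity) (div_lt_self Real.pi_pos hm')).ne'
  refine mul_right_cancel₀ hsin ?_
  have hangle : ((j : ℝ) + 1) * (Real.pi / m) = Real.pi - ((k : ℝ) + 1) * (Real.pi / m) := by
    have hjk' : (j : ℝ) + k + 2 = m := by exact_mod_cast hjk
    have hmπ : (m : ℝ) * (Real.pi / m) = Real.pi := mul_div_cancel₀ _ (by positivity)
    linear_combination (Real.pi / m) * hjk' + hmπ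
  rw [U_real_cos, U_real_cos, hangle, Real.sin_pi_sub]

section LocalRootSeq

variable {BF : LinearMap.BilinForm ℝ V} {γ δ : V} {gs ds : ℤ → V} {a : ℝ}

def IsChebyshevPair (γ δ : V) (gs ds : ℤ → V) (a : ℝ) (j : ℤ) : Prop :=
  gs (j + 1) = (U ℝ j).eval a • γ + (U ℝ (j - 1)).eval a • δ ∧
    ds (j + 1) = (U ℝ (j - 1)).eval a • γ + (U ℝ j).eval a • δ

lemma isChebyshevPair_zero (hg1 : gs 1 = γ) (hd1 : ds 1 = δ) :
    IsChebyshevPair γ δ gs ds a 0 := by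
  constructor <;> simp [hg1, hd1]

lemma IsChebyshevPair.add_one (hγ : BF γ γ = 1) (hδ : BF δ δ = 1)
    (hγδ : BF γ δ = -a) (hδγ : BF δ γ = -a)
    (hgrec : ∀ i, gs (i + 1) = reflVec BF γ (ds i))
    (hdrec : ∀ i, ds (i + 1) = reflVec BF δ (gs i))
    {j : ℤ} (h : IsChebyshevPair γ δ gs ds a j) : IsChebyshevPair γ δ gs ds a (j + 1) := by
  obtain ⟨hg, hd⟩ := h
  have hU : (U ℝ (j + 1)).eval a = 2 * a * (U ℝ j).eval a - (U ℝ (j - 1)).eval a := by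
    simp [U_add_one]
  constructor
  · rw [hgrec, hd, reflVec_smul_add_smul hγ, hδγ, hU, add_sub_cancel_right]
    congr 2
    ring
  · rw [hdrec, hg, add_comm, reflVec_smul_add_smul hδ, hγδ, hU, add_sub_cancel_right, add_comm]
    congr 2
    ring

lemma IsChebyshevPair.of_add_one (hγ : BF γ γ = 1) (hδ : BF δ δ = 1)
    (hγδ : BF γ δ = -a) (hδγ : BF δ γ = -a)
    (hgrec : ∀ i, gs (i + 1) = reflVec BF γ (ds i))
    (hdrec : ∀ i, ds (i + 1) = reflVec BF δ (gs i))
    {j : ℤ} (h : IsChebyshevPair γ δ gs ds a (j + 1)) : IsChebyshevPair γ δ gs ds a j := by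
  obtain ⟨hg, hd⟩ := h
  rw [add_sub_cancel_right] at hg hd
  have hU : (U ℝ (j - 1)).eval a = 2 * a * (U ℝ j).eval a - (U ℝ (j + 1)).eval a := by
    simp [U_sub_one]
  constructor
  · rw [← reflVec_reflVec hδ (gs (j + 1)), ← hdrec, hd, add_comm, reflVec_smul_add_smul hδ,
      hγδ, hU, add_comm]
    congr 2
    ring
  · rw [← reflVec_reflVec hγ (ds (j + 1)), ← hgrec, hg, reflVec_smul_add_smul hγ, hδγ, hU]
    congr 2
    ring

lemma isChebyshevPair (hγ : BF γ γ = 1) (hδ : BF δ δ = 1)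
    (hγδ : BF γ δ = -a) (hδγ : BF δ γ = -a) (hg1 : gs 1 = γ) (hd1 : ds 1 = δ)
    (hgrec : ∀ i, gs (i + 1) = reflVec BF γ (ds i))
    (hdrec : ∀ i, ds (i + 1) = reflVec BF δ (gs i)) (j : ℤ) :
    IsChebyshevPair γ δ gs ds a j := by
  induction j using Int.induction_on with
  | zero => exact isChebyshevPair_zero hg1 hd1
  | succ i ih => exact ih.add_one hγ hδ hγδ hδγ hgrec hdrec
  | pred i ih =>
    exact .of_add_one hγ hδ hγδ hδγ hgrec hdrec (by rwa [sub_add_cancel])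

end LocalRootSeq

/-- If `a = −B(γ,δ) = cos (π/m)` for an integer `m ≥ 2`, then for every
`i ∈ ℤ`, `γ_i = δ_{m+1−i}` and `δ_i = γ_{m+1−i}`. -/
theorem localRootSeq_symmetry
    (BF : LinearMap.BilinForm ℝ V) (hsymm : ∀ u v : V, BF u v = BF v u)
    (γ δ : V) (hγ : BF γ γ = 1) (hδ : BF δ δ = 1)
    (gs ds : ℤ → V) (hg1 : gs 1 = γ) (hd1 : ds 1 = δ)
    (hgrec : ∀ i : ℤ, gs (i + 1) = reflVec BF γ (ds i))
    (hdrec : ∀ i : ℤ, ds (i + 1) = reflVec BF δ (gs i))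
    (m : ℕ) (hm : 2 ≤ m) (ha : - BF γ δ = Real.cos (Real.pi / (m : ℝ))) :
    ∀ i : ℤ, gs i = ds ((m : ℤ) + 1 - i) ∧ ds i = gs ((m : ℤ) + 1 - i) := by
  intro i
  have hγδ : BF γ δ = -Real.cos (Real.pi / m) := by rw [← ha, neg_neg]
  have hpair := isChebyshevPair hγ hδ hγδ ((hsymm δ γ).trans hγδ) hg1 hd1 hgrec hdrec
  obtain ⟨hg, hd⟩ := hpair (i - 1)
  obtain ⟨hg', hd'⟩ := hpair (m - i)
  rw [sub_add_cancel] at hg hd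
  rw [show (m : ℤ) + 1 - i = m - i + 1 by ring, hg, hd, hg', hd',
    U_real_eval_cos_pi_div_eq hm (j := m - i - 1) (k := i - 1) (by ring),
    U_real_eval_cos_pi_div_eq hm (j := m - i) (k := i - 1 - 1) (by ring)]
  exact ⟨rfl, rfl⟩
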